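/- Under the user × advertiser adjacency relation with post-attribution contribution bound enforcement with bound r, for any attribution rule, any two adjacent datasets (differing by adding all impressions and conversions of a single (user, advertiser) pair) yield attributed datasets at ℓ1-distance at most r. -/

import Mathlib

/-! Framework for differentially private ad conversion measurement
(Delaney et al., "Differentially Private Ad Conversion Measurement"). -/

structure Impression where
  time : ℕ
  user : ℕ
  pub : ℕ
  adv : ℕ
  id : ℕ
deriving DecidableEq

structure Conversion where
  time : ℕ
  user : ℕ
  adv : ℕ
  id : ℕ
deriving DecidableEq

structure Dataset where
  imps : List Impression
  convs : List Conversion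

/-- An attribution rule maps a time-ordered list of impressions and a conversion
to a list of credits (one per impression). -/
abbrev AttrRule := List Impression → Conversion → List ℝ

/-- A valid attribution rule outputs one nonnegative weight per impression, summing to 1. -/
def ValidRule (a : AttrRule) : Prop :=
  ∀ is c, is ≠ [] →
    (a is c).length = is.length ∧ (a is c).sum = 1 ∧ ∀ w ∈ a is c, (0 : ℝ) ≤ w

/-- Impressions eligible for attribution of conversion `c`: those occurring earlier
with the same user and advertiser. -/
def eligible (D : Dataset) (c : Conversion) : List Impression :=
  D.imps.filter fun i => decide (i.time < c.time ∧ i.user = c.user ∧ i.adv = c.adv)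

/-- ℓ₁ distance between attributed datasets. -/
noncomputable def l1dist (w w' : (Impression × Conversion) →₀ ℝ) : ℝ :=
  (w - w').sum fun _ v => |v|

/-- Impressions and conversions are listed in time order. -/
def SortedDS (D : Dataset) : Prop :=
  D.imps.Pairwise (fun i j => i.time ≤ j.time) ∧
  D.convs.Pairwise (fun c c' => c.time ≤ c'.time)

/-- Inner loop of post-attribution contribution-bound enforcement: each weighted
(impression, conversion) pair is kept only if the remaining bound of its scope covers
the weight, in which case the weight is deducted. -/
noncomputable def applyPairs {σ : Type} [DecidableEq σ] (s : Impression → σ) (c : Conversion) :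
    List (Impression × ℝ) → (σ → ℝ) × ((Impression × Conversion) →₀ ℝ) →
      (σ → ℝ) × ((Impression × Conversion) →₀ ℝ)
  | [], st => st
  | (i, w) :: rest, st =>
      if w ≤ st.1 (s i) then
        applyPairs s c rest
          (Function.update st.1 (s i) (st.1 (s i) - w), st.2 + Finsupp.single (i, c) w)
      else
        applyPairs s c rest st

/-- Attribution with post-attribution contribution bound enforcement (Algorithm 1),
with contribution bounding scope map `s` and contribution bound `r`. -/
noncomputable def postAttr {σ : Type} [DecidableEq σ] (a : AttrRule) (s : Impression → σ)
    (r : ℝ) (D : Dataset) : (Impression × Conversion) →₀ ℝ :=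
  (D.convs.foldl
    (fun st c => applyPairs s c ((eligible D c).zip (a (eligible D c) c)) st)
    ((fun _ => r : σ → ℝ), (0 : (Impression × Conversion) →₀ ℝ))).2

/-- Attribution with pre-attribution contribution bound enforcement (Algorithm 2):
for each conversion, every scope with an eligible impression pays one unit of its bound
if available, otherwise its impressions are excluded from attribution. -/
noncomputable def preAttr {σ : Type} [DecidableEq σ] (a : AttrRule) (s : Impression → σ)
    (r : ℝ) (D : Dataset) : (Impression × Conversion) →₀ ℝ :=
  (D.convs.foldl
    (fun (st : (σ → ℝ) × ((Impression × Conversion) →₀ ℝ)) c =>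
      let el := eligible D c
      let surv := el.filter fun i => decide ((1 : ℝ) ≤ st.1 (s i))
      let scopes := (el.map s).dedup
      ((fun x => if x ∈ scopes ∧ (1 : ℝ) ≤ st.1 x then st.1 x - 1 else st.1 x : σ → ℝ),
        st.2 + ((surv.zip (a surv c)).map fun p => Finsupp.single (p.1, c) p.2).sum))
    ((fun _ => r : σ → ℝ), (0 : (Impression × Conversion) →₀ ℝ))).2

/-- Attribution without any contribution bound enforcement. -/
noncomputable def attrNoCap (a : AttrRule) (D : Dataset) :
    (Impression × Conversion) →₀ ℝ :=
  (D.convs.map fun c =>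
    (((eligible D c).zip (a (eligible D c) c)).map fun p => Finsupp.single (p.1, c) p.2).sum).sum

/-- Adjacency: `D'` results from `D` by adding a single impression (in time order). -/
def AddOneImpression (D D' : Dataset) : Prop :=
  ∃ (i0 : Impression) (l₁ l₂ : List Impression),
    D.imps = l₁ ++ l₂ ∧ D'.imps = l₁ ++ i0 :: l₂ ∧ D.convs = D'.convs

/-- Adjacency: `D` results from `D'` by removing all impressions whose scope (under `si`)
is `v` and all conversions whose scope (under `sc`) is `v`. -/
def RemovesScope {σ : Type} [DecidableEq σ] (si : Impression → σ)
    (sc : Conversion → Option σ) (v : σ) (D D' : Dataset) : Prop :=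
  D.imps = D'.imps.filter (fun i => decide (si i ≠ v)) ∧
  D.convs = D'.convs.filter (fun c => decide (sc c ≠ some v))

/-- First-touch attribution. -/
noncomputable def FTA : AttrRule := fun is _ =>
  match is with
  | [] => []
  | _ :: t => 1 :: t.map fun _ => 0

/-- Last-touch attribution. -/
noncomputable def LTA : AttrRule := fun is _ =>
  match is with
  | [] => []
  | _ :: _ => List.replicate (is.length - 1) 0 ++ [1]

/-- Uniform multi-touch attribution. -/
noncomputable def UNI : AttrRule := fun is _ => is.map fun _ => ((is.length : ℝ))⁻¹

/-- U-shaped attribution. -/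
noncomputable def USH : AttrRule := fun is _ =>
  match is with
  | [] => []
  | [_] => [1]
  | [_, _] => [0.5, 0.5]
  | _ :: _ :: _ :: _ =>
      (0.4 : ℝ) :: (List.replicate (is.length - 2) ((0.2 : ℝ) / ((is.length : ℝ) - 2)) ++ [0.4])

/-- Exponential time decay attribution with half-life `th`. -/
noncomputable def EXPR (th : ℝ) : AttrRule := fun is c =>
  let wt : Impression → ℝ := fun i => (2 : ℝ) ^ (-(((c.time : ℝ) - (i.time : ℝ)) / th))
  is.map fun i => wt i / (is.map wt).sum


/-!
Conversions of the removed (user, advertiser) scope `v` only ever touch the bound of `v`, and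
every other conversion sees the same eligible impressions and, by induction, the same remaining
bound in both datasets, so it is attributed identically. Hence the two attributions differ only
by pairs kept for conversions of scope `v`, and each kept weight is nonnegative and was deducted
from the bound of `v`, which never drops below zero: their total is at most `r`.
-/

noncomputable def l1norm {α : Type*} (F : α →₀ ℝ) : ℝ := F.sum fun _ w => |w|

theorem l1dist_eq_l1norm (w w' : (Impression × Conversion) →₀ ℝ) :
    l1dist w w' = l1norm (w - w') := rfl

theorem l1norm_add_le {α : Type*} (F G : α →₀ ℝ) : l1norm (F + G) ≤ l1norm F + l1norm G := by
  classical
  simp only [l1norm]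
  rw [Finsupp.sum_of_support_subset (F + G) Finsupp.support_add _ (by simp),
    Finsupp.sum_of_support_subset F Finset.subset_union_left _ (by simp),
    Finsupp.sum_of_support_subset G Finset.subset_union_right _ (by simp),
    ← Finset.sum_add_distrib]
  exact Finset.sum_le_sum fun x _ => abs_add_le (F x) (G x)

theorem l1norm_neg {α : Type*} (F : α →₀ ℝ) : l1norm (-F) = l1norm F := by
  simp [l1norm, Finsupp.sum_neg_index]

theorem l1norm_single {α : Type*} (x : α) (w : ℝ) : l1norm (Finsupp.single x w) = |w| :=
  Finsupp.sum_single_index abs_zero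

section applyPairs

variable {σ : Type} [DecidableEq σ] {s : Impression → σ} {c : Conversion}
  {ps : List (Impression × ℝ)} {w : σ}

theorem applyPairs_fst_nonneg (st : (σ → ℝ) × ((Impression × Conversion) →₀ ℝ)) {x : σ}
    (hx : 0 ≤ st.1 x) : 0 ≤ (applyPairs s c ps st).1 x := by
  induction ps generalizing st with
  | nil => exact hx
  | cons p ps ih =>
    obtain ⟨i, u⟩ := p
    rw [applyPairs]
    split_ifs with hu
    · refine ih _ ?_
      rcases eq_or_ne x (s i) with rfl | hxi
      · simpa using hu
      · simpa [Function.update_of_ne hxi] using hx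
    · exact ih _ hx

theorem applyPairs_fst_of_ne (hw : ∀ p ∈ ps, s p.1 = w)
    (st : (σ → ℝ) × ((Impression × Conversion) →₀ ℝ)) {x : σ} (hx : x ≠ w) :
    (applyPairs s c ps st).1 x = st.1 x := by
  induction ps generalizing st with
  | nil => rfl
  | cons p ps ih =>
    obtain ⟨i, u⟩ := p
    have hi : s i = w := hw _ List.mem_cons_self
    have hps := fun p hp => hw p (List.mem_cons_of_mem _ hp)
    rw [applyPairs]
    split_ifs
    · rw [ih hps]
      simp [Function.update_of_ne (hi ▸ hx)]
    · exact ih hps st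

theorem applyPairs_congr (hw : ∀ p ∈ ps, s p.1 = w)
    {st₁ st₂ : (σ → ℝ) × ((Impression × Conversion) →₀ ℝ)} (h : st₁.1 w = st₂.1 w) :
    (applyPairs s c ps st₁).1 w = (applyPairs s c ps st₂).1 w ∧
      (applyPairs s c ps st₁).2 - st₁.2 = (applyPairs s c ps st₂).2 - st₂.2 := by
  induction ps generalizing st₁ st₂ with
  | nil => exact ⟨h, by simp only [applyPairs, sub_self]⟩
  | cons p ps ih =>
    obtain ⟨i, u⟩ := p
    have hi : s i = w := hw _ List.mem_cons_self
    have hps := fun p hp => hw p (List.mem_cons_of_mem _ hp)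
    rw [applyPairs, applyPairs, hi, h]
    split_ifs
    · refine (ih hps ?_).imp id fun h₂ => ?_
      · simp
      · simpa only [sub_add_eq_sub_sub, sub_add_cancel]
          using congrArg (· + Finsupp.single (i, c) u) h₂
    · exact ih hps h

theorem l1norm_applyPairs_sub_add_le (hw : ∀ p ∈ ps, s p.1 = w) (hnn : ∀ p ∈ ps, 0 ≤ p.2)
    (st : (σ → ℝ) × ((Impression × Conversion) →₀ ℝ)) :
    l1norm ((applyPairs s c ps st).2 - st.2) + (applyPairs s c ps st).1 w ≤ st.1 w := by
  induction ps generalizing st with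
  | nil => simp [applyPairs, l1norm]
  | cons p ps ih =>
    obtain ⟨i, u⟩ := p
    have hi : s i = w := hw _ List.mem_cons_self
    have hu : 0 ≤ u := hnn _ List.mem_cons_self
    rw [applyPairs]
    split_ifs
    · set st' := (Function.update st.1 (s i) (st.1 (s i) - u), st.2 + Finsupp.single (i, c) u)
      have hrest := ih (fun p hp => hw p (List.mem_cons_of_mem _ hp))
        (fun p hp => hnn p (List.mem_cons_of_mem _ hp)) st'
      have htri := l1norm_add_le ((applyPairs s c ps st').2 - st'.2) (Finsupp.single (i, c) u)
      simp only [st', hi, Function.update_self, l1norm_single, abs_of_nonneg hu,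
        sub_add_eq_sub_sub, sub_add_cancel] at hrest htri ⊢
      linarith
    · exact ih (fun p hp => hw p (List.mem_cons_of_mem _ hp))
        (fun p hp => hnn p (List.mem_cons_of_mem _ hp)) st

end applyPairs

theorem ValidRule.nonneg_of_mem_zip {a : AttrRule} (ha : ValidRule a) {is : List Impression}
    {c : Conversion} {p : Impression × ℝ} (hp : p ∈ is.zip (a is c)) : 0 ≤ p.2 :=
  (ha is c (List.ne_nil_of_mem (List.of_mem_zip hp).1)).2.2 _ (List.of_mem_zip hp).2

section postAttr

variable {σ : Type} {s : Impression → σ} {sc : Conversion → σ}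

theorem scope_eq_of_mem_zip_eligible
    (hs : ∀ i c, i.user = c.user → i.adv = c.adv → s i = sc c) {D : Dataset} {c : Conversion}
    {l : List ℝ} {p : Impression × ℝ} (hp : p ∈ (eligible D c).zip l) : s p.1 = sc c := by
  have hi := (List.of_mem_zip hp).1
  simp only [eligible, List.mem_filter, decide_eq_true_eq] at hi
  exact hs _ _ hi.2.2.1 hi.2.2.2

variable [DecidableEq σ]

theorem eligible_eq_of_imps_eq_filter
    (hs : ∀ i c, i.user = c.user → i.adv = c.adv → s i = sc c) {v : σ} {D D' : Dataset}
    (himps : D.imps = D'.imps.filter fun i => decide (s i ≠ v)) {c : Conversion}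
    (hc : sc c ≠ v) : eligible D c = eligible D' c := by
  rw [eligible, eligible, himps, List.filter_filter]
  refine List.filter_congr fun i _ => ?_
  by_cases h : i.time < c.time ∧ i.user = c.user ∧ i.adv = c.adv
  · simp [h, hs i c h.2.1 h.2.2, hc]
  · simp [h]

noncomputable def postAttrStep (a : AttrRule) (s : Impression → σ) (D : Dataset)
    (st : (σ → ℝ) × ((Impression × Conversion) →₀ ℝ)) (c : Conversion) :
    (σ → ℝ) × ((Impression × Conversion) →₀ ℝ) :=
  applyPairs s c ((eligible D c).zip (a (eligible D c) c)) st

theorem postAttr_eq_foldl (a : AttrRule) (s : Impression → σ) (r : ℝ) (D : Dataset) :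
    postAttr a s r D = (D.convs.foldl (postAttrStep a s D) (fun _ => r, 0)).2 := rfl

/-- Invariant relating the runs on `D` and on `D'`: they differ only through scope `v`,
and everything the run on `D'` attributed beyond the run on `D` was paid out of the bound
of `v`. -/
structure ScopeCoupled (v : σ) (r : ℝ) (st st' : (σ → ℝ) × ((Impression × Conversion) →₀ ℝ)) :
    Prop where
  fst_eq : ∀ x ≠ v, st.1 x = st'.1 x
  fst_nonneg : 0 ≤ st'.1 v
  l1norm_sub_add_le : l1norm (st'.2 - st.2) + st'.1 v ≤ r

variable {a : AttrRule} {v : σ} {r : ℝ} {D D' : Dataset}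
  {st st' : (σ → ℝ) × ((Impression × Conversion) →₀ ℝ)} {c : Conversion}

theorem ScopeCoupled.postAttrStep_of_scope_eq (h : ScopeCoupled v r st st') (ha : ValidRule a)
    (hs : ∀ i c, i.user = c.user → i.adv = c.adv → s i = sc c) (hc : sc c = v) :
    ScopeCoupled v r st (postAttrStep a s D' st' c) := by
  have hw : ∀ p ∈ (eligible D' c).zip (a (eligible D' c) c), s p.1 = v :=
    fun p hp => (scope_eq_of_mem_zip_eligible hs hp).trans hc
  have hbound :=
    l1norm_applyPairs_sub_add_le (c := c) hw (fun p hp => ha.nonneg_of_mem_zip hp) st'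
  have htri := l1norm_add_le ((postAttrStep a s D' st' c).2 - st'.2) (st'.2 - st.2)
  rw [sub_add_sub_cancel] at htri
  refine ⟨fun x hx => (h.fst_eq x hx).trans (applyPairs_fst_of_ne hw st' hx).symm,
    applyPairs_fst_nonneg st' h.fst_nonneg, ?_⟩
  unfold postAttrStep at htri ⊢
  linarith [h.l1norm_sub_add_le]

theorem ScopeCoupled.postAttrStep_of_scope_ne (h : ScopeCoupled v r st st')
    (hs : ∀ i c, i.user = c.user → i.adv = c.adv → s i = sc c)
    (himps : D.imps = D'.imps.filter fun i => decide (s i ≠ v)) (hc : sc c ≠ v) :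
    ScopeCoupled v r (postAttrStep a s D st c) (postAttrStep a s D' st' c) := by
  have hw : ∀ p ∈ (eligible D' c).zip (a (eligible D' c) c), s p.1 = sc c :=
    fun p hp => scope_eq_of_mem_zip_eligible hs hp
  obtain ⟨hfst, hsnd⟩ := applyPairs_congr (c := c) hw (h.fst_eq _ hc)
  have hdiff : (postAttrStep a s D' st' c).2 - (postAttrStep a s D st c).2 = st'.2 - st.2 := by
    rw [postAttrStep, postAttrStep, eligible_eq_of_imps_eq_filter hs himps hc,
      ← sub_add_cancel (applyPairs _ _ _ st).2 st.2, hsnd]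
    abel
  have hv : (postAttrStep a s D' st' c).1 v = st'.1 v := applyPairs_fst_of_ne hw st' hc.symm
  refine ⟨fun x hx => ?_, hv ▸ h.fst_nonneg, hdiff ▸ hv ▸ h.l1norm_sub_add_le⟩
  rw [postAttrStep, postAttrStep, eligible_eq_of_imps_eq_filter hs himps hc]
  rcases eq_or_ne x (sc c) with rfl | hxc
  · exact hfst
  · rw [applyPairs_fst_of_ne hw st hxc, applyPairs_fst_of_ne hw st' hxc]
    exact h.fst_eq x hx

theorem ScopeCoupled.foldl (h : ScopeCoupled v r st st') (ha : ValidRule a)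
    (hs : ∀ i c, i.user = c.user → i.adv = c.adv → s i = sc c)
    (himps : D.imps = D'.imps.filter fun i => decide (s i ≠ v)) (L : List Conversion) :
    ScopeCoupled v r ((L.filter fun c => decide (some (sc c) ≠ some v)).foldl
      (postAttrStep a s D) st) (L.foldl (postAttrStep a s D') st') := by
  induction L generalizing st st' with
  | nil => exact h
  | cons c L ih =>
    by_cases hc : sc c = v
    · rw [List.filter_cons_of_neg (by simp [hc])]
      exact ih (h.postAttrStep_of_scope_eq ha hs hc)
    · rw [List.filter_cons_of_pos (by simp [hc])]
      exact ih (h.postAttrStep_of_scope_ne hs himps hc)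

theorem l1dist_postAttr_le_of_removesScope (ha : ValidRule a)
    (hs : ∀ i c, i.user = c.user → i.adv = c.adv → s i = sc c) (hr : 0 ≤ r)
    (hadj : RemovesScope s (fun c => some (sc c)) v D D') :
    l1dist (postAttr a s r D) (postAttr a s r D') ≤ r := by
  obtain ⟨himps, hconvs⟩ := hadj
  have hinit : ScopeCoupled v r (fun _ => r, 0) (fun _ => r, 0) :=
    ⟨fun _ _ => rfl, hr, by simp [l1norm]⟩
  have h := hinit.foldl ha hs himps D'.convs
  rw [l1dist_eq_l1norm, postAttr_eq_foldl, postAttr_eq_foldl, hconvs, ← neg_sub, l1norm_neg]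
  linarith [h.l1norm_sub_add_le, h.fst_nonneg]

end postAttr

theorem post_attr_user_advertiser_valid_general (a : AttrRule) (ha : ValidRule a)
    (r : ℕ) (v : ℕ × ℕ) (D D' : Dataset)
    (hadj : RemovesScope (fun i => (i.user, i.adv)) (fun c => some (c.user, c.adv)) v D D') :
    l1dist (postAttr a (fun i => (i.user, i.adv)) (r : ℝ) D)
      (postAttr a (fun i => (i.user, i.adv)) (r : ℝ) D') ≤ (r : ℝ) :=
  l1dist_postAttr_le_of_removesScope ha (fun _ _ hu hadv => Prod.ext hu hadv) r.cast_nonneg hadj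

/-- Theorem A.4: for any attribution rule, the user × advertiser adjacency relation with
post-attribution contribution bound enforcement (bound `r`, per (user, advertiser) scope)
yields attributed datasets at ℓ₁-distance at most `r`. -/
theorem post_attr_user_advertiser_valid (a : AttrRule) (ha : ValidRule a)
    (r : ℕ) (hr : 0 < r) (v : ℕ × ℕ) (D D' : Dataset) (hD' : SortedDS D')
    (hadj : RemovesScope (fun i => (i.user, i.adv)) (fun c => some (c.user, c.adv)) v D D') :
    l1dist (postAttr a (fun i => (i.user, i.adv)) (r : ℝ) D)
      (postAttr a (fun i => (i.user, i.adv)) (r : ℝ) D') ≤ (r : ℝ) :=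
  post_attr_user_advertiser_valid_general a ha r v D D' hadj
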